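/- arXiv:2109.07935 — 4 statements merged into one kernel-verified Lean document; each statement's English description precedes it below -/
import Mathlib

section
/- Let k ≥ 1 and let H be a graph on 2k vertices whose vertex set is the disjoint union of a set A of size k and a set B of size k, where A induces a complete graph (a clique) in H and B induces an empty graph (an independent set) in H. Then H contains a copy of the fan F_{⌈3k/4 − 3/2⌉} or the complement of H contains a copy of F_{⌈3k/4 − 3/2⌉}. -/
open Finset

/-- `G.HasFan n` means `G` contains a copy of the fan `F_n`: a vertex `v` (the centre)
and `2n` further distinct vertices such that each pair `a i, b i` forms a triangle
with `v`. -/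
def SimpleGraph.HasFan {V : Type*} (G : SimpleGraph V) (n : ℕ) : Prop :=
  ∃ (v : V) (a b : Fin n → V),
    Function.Injective (Sum.elim a b) ∧
    ∀ i, G.Adj v (a i) ∧ G.Adj v (b i) ∧ G.Adj (a i) (b i)

section Aux
variable {V : Type*} [DecidableEq V]

/-- Defect version of Hall's theorem. -/
lemma defect_hall [Nonempty V] (S : Finset V) (N : V → Finset V) (D : ℕ)
    (h : ∀ T ⊆ S, T.card ≤ (T.biUnion N).card + D) :
    ∃ s ⊆ S, S.card ≤ s.card + D ∧ ∃ f : V → V, Set.InjOn f ↑s ∧ ∀ y ∈ s, f y ∈ N y := by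
  classical
  -- Hall with dummy vertices
  set t : {y // y ∈ S} → Finset (V ⊕ Fin D) :=
    fun y => ((N y.1).map ⟨Sum.inl, Sum.inl_injective⟩) ∪
      ((Finset.univ : Finset (Fin D)).map ⟨Sum.inr, Sum.inr_injective⟩) with ht
  have hall : ∀ s : Finset {y // y ∈ S}, s.card ≤ (s.biUnion t).card := by
    intro s
    rcases s.eq_empty_or_nonempty with rfl | hne
    · simp
    · have hbU : s.biUnion t =
        ((s.biUnion fun y => N y.1).map ⟨Sum.inl, Sum.inl_injective⟩) ∪
          ((Finset.univ : Finset (Fin D)).map ⟨Sum.inr, Sum.inr_injective⟩) := by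
        ext x
        simp only [mem_biUnion, ht, mem_union, mem_map, Function.Embedding.coeFn_mk]
        constructor
        · rintro ⟨y, hy, (h1 | h2)⟩
          · rcases h1 with ⟨a, ha, rfl⟩
            exact Or.inl ⟨a, ⟨y, hy, ha⟩, rfl⟩
          · exact Or.inr h2
        · rintro (⟨a, ⟨y, hy, ha⟩, rfl⟩ | h2)
          · exact ⟨y, hy, Or.inl ⟨a, ha, rfl⟩⟩
          · obtain ⟨y, hy⟩ := hne
            exact ⟨y, hy, Or.inr h2⟩
      rw [hbU, Finset.card_union_of_disjoint, Finset.card_map, Finset.card_map,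
        Finset.card_univ, Fintype.card_fin]
      · have hcards : (s.biUnion fun y => N y.1).card = ((s.image Subtype.val).biUnion N).card := by
          congr 1
          ext x
          simp
        have hsc : s.card = (s.image Subtype.val).card :=
          (Finset.card_image_of_injOn (Set.injOn_of_injective Subtype.val_injective)).symm
        rw [hcards, hsc]
        exact h _ (by intro x hx; simp only [mem_image] at hx; obtain ⟨y, _, rfl⟩ := hx; exact y.2)
      · simp only [Finset.disjoint_left, mem_map, Function.Embedding.coeFn_mk]
        rintro x ⟨a, _, rfl⟩ ⟨b, _, hb⟩
        exact Sum.inl_ne_inr hb.symm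
  obtain ⟨F, Finj, hF⟩ := (Finset.all_card_le_biUnion_card_iff_exists_injective t).mp hall
  -- extract the matching
  set sL : Finset {y // y ∈ S} := Finset.univ.filter (fun y => (F y).isLeft) with hsL
  refine ⟨sL.image Subtype.val, ?_, ?_, ?_⟩
  · intro x hx; simp only [mem_image] at hx; obtain ⟨y, _, rfl⟩ := hx; exact y.2
  · -- cardinality
    have h1 : (sL.image Subtype.val).card = sL.card :=
      Finset.card_image_of_injOn (Set.injOn_of_injective Subtype.val_injective)
    have h2 : sL.card + (Finset.univ.filter (fun y => ¬ (F y).isLeft)).card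
        = (Finset.univ : Finset {y // y ∈ S}).card := by
      rw [hsL]; exact Finset.card_filter_add_card_filter_not _
    have h3 : (Finset.univ.filter (fun y : {y // y ∈ S} => ¬ (F y).isLeft)).card ≤ D := by
      have : ∀ y ∈ (Finset.univ.filter (fun y : {y // y ∈ S} => ¬ (F y).isLeft)),
          F y ∈ ((Finset.univ : Finset (Fin D)).map ⟨Sum.inr, Sum.inr_injective⟩) := by
        intro y hy
        simp only [mem_filter] at hy
        have hFy := hF y
        rw [ht] at hFy
        simp only [mem_union] at hFy
        rcases hFy with h1' | h2'
        · exfalso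
          simp only [mem_map, Function.Embedding.coeFn_mk] at h1'
          obtain ⟨a, _, ha⟩ := h1'
          rw [← ha] at hy
          simp at hy
        · exact h2'
      calc (Finset.univ.filter (fun y : {y // y ∈ S} => ¬ (F y).isLeft)).card
          ≤ ((Finset.univ : Finset (Fin D)).map ⟨Sum.inr, Sum.inr_injective⟩).card :=
            Finset.card_le_card_of_injOn F this (Set.injOn_of_injective Finj)
        _ = D := by rw [Finset.card_map, Finset.card_univ, Fintype.card_fin]
    have h4 : (Finset.univ : Finset {y // y ∈ S}).card = S.card := by
      rw [Finset.card_univ, Fintype.card_coe]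
    omega
  · -- the matching
    set f : V → V := fun v => if hv : v ∈ S then
        (Sum.elim id (fun _ => v) (F ⟨v, hv⟩)) else v with hfdef
    have key : ∀ y ∈ sL.image Subtype.val, ∃ (hy : y ∈ S),
        Sum.inl (f y) = F ⟨y, hy⟩ ∧ f y ∈ N y := by
      intro y hy
      simp only [mem_image, hsL, mem_filter, mem_univ, true_and] at hy
      obtain ⟨⟨y', hy'S⟩, hleft, rfl⟩ := hy
      refine ⟨hy'S, ?_⟩
      have hFy := hF ⟨y', hy'S⟩
      rw [ht] at hFy
      simp only [mem_union, mem_map, Function.Embedding.coeFn_mk] at hFy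
      rcases hFy with ⟨a, haN, ha⟩ | ⟨a, _, ha⟩
      · have : f y' = a := by rw [hfdef]; simp only [hy'S, dif_pos]; rw [← ha]; rfl
        rw [this, ha]; exact ⟨rfl, haN⟩
      · exfalso; rw [← ha] at hleft; simp at hleft
    refine ⟨f, ?_, fun y hy => ((key y hy).choose_spec).2⟩
    intro y1 hy1 y2 hy2 heq
    obtain ⟨h1, e1, _⟩ := key y1 hy1
    obtain ⟨h2, e2, _⟩ := key y2 hy2
    have : F ⟨y1, h1⟩ = F ⟨y2, h2⟩ := by rw [← e1, ← e2, heq]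
    have := Finj this
    exact congrArg Subtype.val this


/-- A star-matching structure: a centre `v ∈ X`, and `t` vertices of `Y` adjacent
to `v`, matched injectively to partners in `X \ {v}`. -/
def MatchS (G : SimpleGraph V) (X Y : Finset V) (t : ℕ) : Prop :=
  ∃ v ∈ X, ∃ s : Finset V, s ⊆ Y ∧ s.card = t ∧ ∃ f : V → V,
    Set.InjOn f ↑s ∧ ∀ y ∈ s, f y ∈ X.erase v ∧ G.Adj v y ∧ G.Adj y (f y)

lemma MatchS.mono {G : SimpleGraph V} {X Y : Finset V} {t t' : ℕ} (h : MatchS G X Y t)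
    (ht : t' ≤ t) : MatchS G X Y t' := by
  obtain ⟨v, hv, s, hsY, hscard, f, finj, hf⟩ := h
  obtain ⟨s', hs's, hs'card⟩ := Finset.exists_subset_card_eq (hscard ▸ ht)
  exact ⟨v, hv, s', hs's.trans hsY, hs'card, f,
    finj.mono (by exact_mod_cast hs's), fun y hy => hf y (hs's hy)⟩

lemma MatchS.zero {G : SimpleGraph V} {X Y : Finset V} (hX : X.Nonempty) :
    MatchS G X Y 0 := by
  obtain ⟨v, hv⟩ := hX
  exact ⟨v, hv, ∅, by simp, by simp, id, by simp, by simp⟩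

/-- Glue a star-matching of size `t` with a pairing of the rest of the clique `X`
into a fan of size `t + (|X| - 1 - t)/2`. -/
lemma MatchS.hasFan {G : SimpleGraph V} {X Y : Finset V} {t : ℕ}
    (hdisj : Disjoint X Y) (hX : G.IsClique ↑X) (h : MatchS G X Y t) :
    G.HasFan (t + (X.card - 1 - t) / 2) := by
  classical
  obtain ⟨v, hv, s, hsY, hscard, f, finj, hf⟩ := h
  set C : Finset V := X.erase v with hCdef
  have himg : s.image f ⊆ C := by
    intro x hx
    simp only [mem_image] at hx
    obtain ⟨y, hy, rfl⟩ := hx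
    exact (hf y hy).1
  have hcardimg : (s.image f).card = t := by
    rw [Finset.card_image_of_injOn finj, hscard]
  set R : Finset V := C \ s.image f with hRdef
  have hCcard : C.card = X.card - 1 := Finset.card_erase_of_mem hv
  have hRcard : R.card = X.card - 1 - t := by
    rw [hRdef, Finset.card_sdiff_of_subset himg, hcardimg, hCcard]
  -- enumerations
  set es : Fin t → V := fun i => ((Finset.equivFinOfCardEq hscard).symm i : V) with hesdef
  have hes_mem : ∀ i, es i ∈ s := fun i => ((Finset.equivFinOfCardEq hscard).symm i).2
  have hes_inj : Function.Injective es :=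
    fun i j hij => (Equiv.injective _) (Subtype.val_injective hij)
  set eR : Fin (X.card - 1 - t) → V := fun i => ((Finset.equivFinOfCardEq hRcard).symm i : V)
    with heRdef
  have heR_mem : ∀ i, eR i ∈ R := fun i => ((Finset.equivFinOfCardEq hRcard).symm i).2
  have heR_inj : Function.Injective eR :=
    fun i j hij => (Equiv.injective _) (Subtype.val_injective hij)
  set n := t + (X.card - 1 - t) / 2 with hndef
  have hidx : ∀ i : Fin n, ¬ ((i : ℕ) < t) → 2 * ((i : ℕ) - t) + 1 < X.card - 1 - t := by
    intro i hi
    have := i.2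
    omega
  set bb : Fin n → V := fun i =>
    if h : (i : ℕ) < t then es ⟨i, h⟩ else eR ⟨2 * ((i : ℕ) - t), by have := hidx i h; omega⟩
    with hbbdef
  set aa : Fin n → V := fun i =>
    if h : (i : ℕ) < t then f (es ⟨i, h⟩) else eR ⟨2 * ((i : ℕ) - t) + 1, hidx i h⟩
    with haadef
  -- membership facts
  have hR_X : R ⊆ X := fun x hx => Finset.mem_of_mem_erase (Finset.mem_sdiff.mp hx).1
  have hC_X : C ⊆ X := fun x hx => Finset.mem_of_mem_erase hx
  have hXYs : ∀ x ∈ X, x ∉ s := fun x hx hxs => (Finset.disjoint_left.mp hdisj hx) (hsY hxs)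
  have haamem : ∀ i : Fin n, aa i ∈ C := by
    intro i
    by_cases hi : (i : ℕ) < t
    · simp only [haadef, dif_pos hi]
      exact (hf _ (hes_mem _)).1
    · simp only [haadef, dif_neg hi]
      exact (Finset.mem_sdiff.mp (heR_mem _)).1
  have hbbC : ∀ i : Fin n, ¬ ((i:ℕ) < t) → bb i ∈ C := by
    intro i hi
    simp only [hbbdef, dif_neg hi]
    exact (Finset.mem_sdiff.mp (heR_mem _)).1
  have hbbs : ∀ i : Fin n, ((i:ℕ) < t) → bb i ∈ s := by
    intro i hi
    simp only [hbbdef, dif_pos hi]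
    exact hes_mem _
  refine ⟨v, aa, bb, ?_, ?_⟩
  · -- injectivity
    intro x y hxy
    have haain : ∀ i j : Fin n, aa i = aa j → i = j := by
      intro i j hij
      by_cases hi : (i : ℕ) < t <;> by_cases hj : (j : ℕ) < t
      · simp only [haadef, dif_pos hi, dif_pos hj] at hij
        have := hes_inj (finj (by exact_mod_cast hes_mem _) (by exact_mod_cast hes_mem _) hij)
        have : (i : ℕ) = (j : ℕ) := by
          have := congrArg Fin.val this; simpa using this
        exact Fin.ext this
      · exfalso
        simp only [haadef, dif_pos hi, dif_neg hj] at hij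
        have h1 : f (es ⟨i, hi⟩) ∈ s.image f := Finset.mem_image_of_mem f (hes_mem _)
        have h2 := (Finset.mem_sdiff.mp (heR_mem ⟨2 * ((j:ℕ) - t) + 1, hidx j hj⟩)).2
        rw [← hij] at h2; exact h2 h1
      · exfalso
        simp only [haadef, dif_neg hi, dif_pos hj] at hij
        have h1 : f (es ⟨j, hj⟩) ∈ s.image f := Finset.mem_image_of_mem f (hes_mem _)
        have h2 := (Finset.mem_sdiff.mp (heR_mem ⟨2 * ((i:ℕ) - t) + 1, hidx i hi⟩)).2
        rw [hij] at h2; exact h2 h1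
      · simp only [haadef, dif_neg hi, dif_neg hj] at hij
        have := congrArg Fin.val (heR_inj hij)
        simp only at this
        have hii := i.2
        have hjj := j.2
        exact Fin.ext (by omega)
    have hbbin : ∀ i j : Fin n, bb i = bb j → i = j := by
      intro i j hij
      by_cases hi : (i : ℕ) < t <;> by_cases hj : (j : ℕ) < t
      · simp only [hbbdef, dif_pos hi, dif_pos hj] at hij
        have := congrArg Fin.val (hes_inj hij)
        simp only at this
        exact Fin.ext (by omega)
      · exfalso
        have h1 := hbbs i hi
        have h2 := hbbC j hj
        rw [hij] at h1
        exact hXYs _ (hC_X h2) h1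
      · exfalso
        have h1 := hbbs j hj
        have h2 := hbbC i hi
        rw [← hij] at h1
        exact hXYs _ (hC_X h2) h1
      · simp only [hbbdef, dif_neg hi, dif_neg hj] at hij
        have := congrArg Fin.val (heR_inj hij)
        simp only at this
        have hii := i.2
        have hjj := j.2
        exact Fin.ext (by omega)
    have hab : ∀ i j : Fin n, aa i ≠ bb j := by
      intro i j hij
      by_cases hj : (j : ℕ) < t
      · have h1 := hbbs j hj
        rw [← hij] at h1
        exact hXYs _ (hC_X (haamem i)) h1
      · by_cases hi : (i : ℕ) < t
        · simp only [haadef, dif_pos hi] at hij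
          simp only [hbbdef, dif_neg hj] at hij
          have h1 : f (es ⟨i, hi⟩) ∈ s.image f := Finset.mem_image_of_mem f (hes_mem _)
          have h2 := (Finset.mem_sdiff.mp (heR_mem ⟨2 * ((j:ℕ) - t), by have := hidx j hj; omega⟩)).2
          rw [← hij] at h2; exact h2 h1
        · simp only [haadef, dif_neg hi] at hij
          simp only [hbbdef, dif_neg hj] at hij
          have := congrArg Fin.val (heR_inj hij)
          simp only at this
          omega
    match x, y with
    | Sum.inl i, Sum.inl j => exact congrArg Sum.inl (haain i j hxy)
    | Sum.inl i, Sum.inr j => exact absurd hxy (hab i j)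
    | Sum.inr i, Sum.inl j => exact absurd hxy.symm (hab j i)
    | Sum.inr i, Sum.inr j => exact congrArg Sum.inr (hbbin i j hxy)
  · -- adjacency
    intro i
    have hvC : ∀ x ∈ C, G.Adj v x := by
      intro x hx
      have hne := (Finset.mem_erase.mp hx).1
      exact hX hv (by exact_mod_cast hC_X hx) (Ne.symm hne)
    refine ⟨hvC _ (haamem i), ?_, ?_⟩
    · by_cases hi : (i : ℕ) < t
      · have := (hf _ (hes_mem ⟨i, hi⟩)).2.1
        simp only [hbbdef, dif_pos hi]
        exact this
      · exact hvC _ (hbbC i hi)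
    · by_cases hi : (i : ℕ) < t
      · simp only [haadef, dif_pos hi, hbbdef]
        exact ((hf _ (hes_mem ⟨i, hi⟩)).2.2).symm
      · simp only [haadef, dif_neg hi, hbbdef]
        have h1 := heR_mem ⟨2 * ((i:ℕ) - t) + 1, hidx i hi⟩
        have h2 := heR_mem ⟨2 * ((i:ℕ) - t), by have := hidx i hi; omega⟩
        have hne : eR ⟨2 * ((i:ℕ) - t) + 1, hidx i hi⟩ ≠
            eR ⟨2 * ((i:ℕ) - t), by have := hidx i hi; omega⟩ := by
          intro hcon
          have := congrArg Fin.val (heR_inj hcon)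
          simp only at this
          omega
        exact hX (by exact_mod_cast hR_X h1) (by exact_mod_cast hR_X h2) hne


lemma pass (G : SimpleGraph V) [DecidableRel G.Adj] (X Y : Finset V) (hdisj : Disjoint X Y)
    (k c1 c2 : ℕ) (hXc : X.card = k) (hYc : Y.card = k)
    (u0 : V) (hu0 : u0 ∈ Y)
    (hc1 : ∀ t, MatchS G X Y t → t ≤ c1)
    (hc2 : ∀ t, MatchS Gᶜ Y X t → t ≤ c2) :
    k ≤ c1 + c2 + 2 ∨ k ≤ c2 + (X.filter (fun x => G.Adj u0 x)).card := by
  classical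
  have hne : Nonempty V := ⟨u0⟩
  by_cases hk2 : k ≤ c1 + c2 + 2
  · exact Or.inl hk2
  push_neg at hk2
  have hXY : ∀ x ∈ X, ∀ y ∈ Y, x ≠ y := by
    intro x hx y hy hxy
    exact (Finset.disjoint_left.mp hdisj hx) (hxy ▸ hy)
  set d0 := (X.filter (fun x => G.Adj u0 x)).card with hd0def
  set Astar := X.filter (fun x => ¬ G.Adj u0 x) with hAstardef
  have hAstarX : Astar ⊆ X := Finset.filter_subset _ _
  have hAstarcard : d0 + Astar.card = k := by
    rw [hd0def, hAstardef, ← hXc]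
    exact Finset.card_filter_add_card_filter_not _
  set N' : V → Finset V := fun y => Astar.filter (fun x => ¬ G.Adj y x) with hN'def
  set D : ℕ := k - 2 - c2 with hDdef
  have hYecard : (Y.erase u0).card = k - 1 := by rw [Finset.card_erase_of_mem hu0, hYc]
  by_cases hHall : ∀ T ⊆ Y.erase u0, T.card ≤ (T.biUnion N').card + D
  · exfalso
    obtain ⟨s, hsub, hcard, f, finj, hfmem⟩ := defect_hall (Y.erase u0) N' D hHall
    have hMatch : MatchS Gᶜ Y X (s.image f).card := by
      refine ⟨u0, hu0, s.image f, ?_, rfl, Function.invFunOn f ↑s, ?_, ?_⟩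
      · intro x hx
        simp only [mem_image] at hx
        obtain ⟨y, hy, rfl⟩ := hx
        exact hAstarX (Finset.mem_of_mem_filter _ (hfmem y hy))
      · intro x1 hx1 x2 hx2 heq
        simp only [Finset.coe_image, Set.mem_image] at hx1 hx2
        obtain ⟨y1, hy1, rfl⟩ := hx1
        obtain ⟨y2, hy2, rfl⟩ := hx2
        have e1 : f (Function.invFunOn f ↑s (f y1)) = f y1 :=
          Function.invFunOn_eq ⟨y1, hy1, rfl⟩
        have e2 : f (Function.invFunOn f ↑s (f y2)) = f y2 :=
          Function.invFunOn_eq ⟨y2, hy2, rfl⟩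
        rw [← e1, ← e2, heq]
      · intro x hx
        simp only [mem_image] at hx
        obtain ⟨y, hy, rfl⟩ := hx
        have hinv_mem : Function.invFunOn f ↑s (f y) ∈ s :=
          Function.invFunOn_mem ⟨y, by exact_mod_cast hy, rfl⟩
        have hinv_eq : f (Function.invFunOn f ↑s (f y)) = f y :=
          Function.invFunOn_eq ⟨y, by exact_mod_cast hy, rfl⟩
        have hfy := hfmem y hy
        simp only [hN'def, mem_filter] at hfy
        have hfyAstar : f y ∈ Astar := hfy.1
        have hfyX : f y ∈ X := hAstarX hfyAstar
        refine ⟨?_, ?_, ?_⟩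
        · exact hsub hinv_mem
        · -- Gᶜ.Adj u0 (f y)
          rw [SimpleGraph.compl_adj]
          constructor
          · exact fun h => hXY _ hfyX _ hu0 h.symm
          · intro h
            rw [hAstardef] at hfyAstar
            exact (Finset.mem_filter.mp hfyAstar).2 h
        · -- Gᶜ.Adj (f y) (invFunOn f s (f y))
          rw [SimpleGraph.compl_adj]
          have hyinvY : Function.invFunOn f ↑s (f y) ∈ Y :=
            Finset.mem_of_mem_erase (hsub hinv_mem)
          constructor
          · exact (hXY _ hfyX _ hyinvY)
          · intro hadj
            -- f y ∈ N' y means ¬ G.Adj y (f y); and inv = some y' with f y' = f y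
            have hy' := hfmem _ hinv_mem
            simp only [hN'def, mem_filter] at hy'
            rw [hinv_eq] at hy'
            exact hy'.2 (hadj.symm)
      
    have hle := hc2 _ hMatch
    rw [Finset.card_image_of_injOn finj] at hle
    rw [hYecard] at hcard
    omega
  push_neg at hHall
  obtain ⟨T, hTsub, hTviol⟩ := hHall
  set W' := T.biUnion N' with hW'def
  have hW'sub : W' ⊆ Astar := by
    rw [hW'def]
    exact Finset.biUnion_subset.mpr fun y _ => Finset.filter_subset _ _
  have hTY : T ⊆ Y := fun y hy => Finset.mem_of_mem_erase (hTsub hy)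
  have hTcard : T.card ≤ k - 1 := hYecard ▸ Finset.card_le_card hTsub
  have hF1 : W'.card + (k - 1) ≤ T.card + c2 := by omega
  set Z := Astar \ W' with hZdef
  have hZcards : Z.card + W'.card = Astar.card := by
    rw [hZdef]
    have := Finset.card_sdiff_of_subset hW'sub
    have hle := Finset.card_le_card hW'sub
    omega
  have hZadj : ∀ x ∈ Z, ∀ y ∈ T, G.Adj y x := by
    intro x hx y hy
    rw [hZdef, Finset.mem_sdiff] at hx
    obtain ⟨hxA, hxW⟩ := hx
    by_contra hnadj
    exact hxW (Finset.mem_biUnion.mpr ⟨y, hy, Finset.mem_filter.mpr ⟨hxA, hnadj⟩⟩)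
  rcases Z.eq_empty_or_nonempty with hZe | ⟨v, hvZ⟩
  · right
    have : Z.card = 0 := by rw [hZe]; rfl
    omega
  · have hvX : v ∈ X := hAstarX (Finset.mem_sdiff.mp hvZ).1
    set M : V → Finset V := fun y => (X.erase v).filter (fun x => G.Adj y x) with hMdef
    set defs := (T.powerset).image (fun T' => T'.card - (T'.biUnion M).card) with hdefsdef
    have hdefs_ne : defs.Nonempty :=
      ⟨_, Finset.mem_image_of_mem _ (Finset.empty_mem_powerset T)⟩
    set d2 := defs.max' hdefs_ne with hd2def
    have hHall2 : ∀ T' ⊆ T, T'.card ≤ (T'.biUnion M).card + d2 := by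
      intro T' hT'
      have : T'.card - (T'.biUnion M).card ≤ d2 := by
        rw [hd2def]
        exact Finset.le_max' defs _ (Finset.mem_image_of_mem _ (Finset.mem_powerset.mpr hT'))
      omega
    obtain ⟨s, hsub, hcard, f, finj, hfmem⟩ := defect_hall T M d2 hHall2
    have hMatch : MatchS G X Y s.card := by
      refine ⟨v, hvX, s, fun y hy => hTY (hsub hy), rfl, f, finj, ?_⟩
      intro y hy
      have hfy := hfmem y hy
      rw [hMdef] at hfy
      simp only [mem_filter] at hfy
      exact ⟨hfy.1, (hZadj v hvZ y (hsub hy)).symm, hfy.2⟩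
    have hs_le : s.card ≤ c1 := hc1 _ hMatch
    have hF4 : T.card ≤ c1 + d2 := by omega
    by_cases hd2z : d2 = 0
    · exfalso
      omega
    · obtain ⟨T₂, hT₂mem, hT₂eq⟩ := Finset.mem_image.mp (defs.max'_mem hdefs_ne)
      have hT₂T : T₂ ⊆ T := Finset.mem_powerset.mp hT₂mem
      set W₂ := T₂.biUnion M with hW₂def
      have hd2' : W₂.card + d2 = T₂.card := by
        have h' : T₂.card - W₂.card = d2 := by rw [hd2def]; exact hT₂eq
        omega
      have hT₂ne : T₂.Nonempty := by
        rw [← Finset.card_pos]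
        omega
      obtain ⟨u1, hu1⟩ := hT₂ne
      have hu1Y : u1 ∈ Y := hTY (hT₂T hu1)
      have hW₂X : W₂ ⊆ X.erase v := by
        rw [hW₂def]
        exact Finset.biUnion_subset.mpr fun y _ => Finset.filter_subset _ _
      have hvW₂ : v ∉ W₂ := fun h => (Finset.mem_erase.mp (hW₂X h)).1 rfl
      have hWX : insert v W₂ ⊆ X := by
        intro x hx
        rcases Finset.mem_insert.mp hx with rfl | hx
        · exact hvX
        · exact Finset.mem_of_mem_erase (hW₂X hx)
      have hWcard : (insert v W₂).card = W₂.card + 1 := Finset.card_insert_of_notMem hvW₂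
      have hcb : ∀ y ∈ T₂, ∀ x ∈ X \ insert v W₂, ¬ G.Adj y x := by
        intro y hy x hx hadj
        rw [Finset.mem_sdiff, Finset.mem_insert] at hx
        push_neg at hx
        obtain ⟨hxX, hxv, hxW₂⟩ := hx
        exact hxW₂ (Finset.mem_biUnion.mpr ⟨y, hy,
          Finset.mem_filter.mpr ⟨Finset.mem_erase.mpr ⟨hxv, hxX⟩, hadj⟩⟩)
      set t3 := min (X \ insert v W₂).card (T₂.erase u1).card with ht3def
      obtain ⟨s3, hs3sub, hs3card⟩ := Finset.exists_subset_card_eq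
        (s := X \ insert v W₂) (min_le_left _ _)
      obtain ⟨P3, hP3sub, hP3card⟩ := Finset.exists_subset_card_eq
        (s := T₂.erase u1) (min_le_right _ _)
      have hMatch3 : MatchS Gᶜ Y X t3 := by
        set e3 : {x // x ∈ s3} ≃ {x // x ∈ P3} :=
          (Finset.equivFinOfCardEq hs3card).trans (Finset.equivFinOfCardEq hP3card).symm
          with he3def
        set f3 : V → V := fun x => if hx : x ∈ s3 then (e3 ⟨x, hx⟩ : V) else x with hf3def
        have hf3mem : ∀ x (hx : x ∈ s3), f3 x ∈ P3 := by
          intro x hx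
          rw [hf3def]
          simp only [dif_pos hx]
          exact (e3 ⟨x, hx⟩).2
        refine ⟨u1, hu1Y, s3, ?_, hs3card, f3, ?_, ?_⟩
        · intro x hx
          exact (Finset.mem_sdiff.mp (hs3sub hx)).1
        · intro x1 hx1 x2 hx2 heq
          simp only [Finset.mem_coe] at hx1 hx2
          rw [hf3def] at heq
          simp only [dif_pos hx1, dif_pos hx2] at heq
          have := e3.injective (Subtype.val_injective heq)
          exact congrArg Subtype.val this
        · intro x hx
          have hfx := hf3mem x hx
          have hfxT₂e : f3 x ∈ T₂.erase u1 := hP3sub hfx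
          have hfxT₂ : f3 x ∈ T₂ := Finset.mem_of_mem_erase hfxT₂e
          have hxXW : x ∈ X \ insert v W₂ := hs3sub hx
          have hxX : x ∈ X := (Finset.mem_sdiff.mp hxXW).1
          refine ⟨?_, ?_, ?_⟩
          · exact Finset.mem_erase.mpr ⟨(Finset.mem_erase.mp hfxT₂e).1, hTY (hT₂T hfxT₂)⟩
          · rw [SimpleGraph.compl_adj]
            exact ⟨fun h => hXY _ hxX _ hu1Y h.symm, fun h => hcb u1 hu1 x hxXW h⟩
          · rw [SimpleGraph.compl_adj]
            refine ⟨hXY _ hxX _ (hTY (hT₂T hfxT₂)), fun h => hcb _ hfxT₂ x hxXW h.symm⟩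
      have ht3le : t3 ≤ c2 := hc2 _ hMatch3
      have hXWcard : (X \ insert v W₂).card + (W₂.card + 1) = k := by
        rw [← hWcard, Finset.card_sdiff_of_subset hWX, hXc]
        have := Finset.card_le_card hWX
        rw [hXc] at this
        omega
      have hT₂card : T₂.card ≤ T.card := Finset.card_le_card hT₂T
      have hu1card : (T₂.erase u1).card + 1 = T₂.card := by
        rw [Finset.card_erase_of_mem hu1]
        have : 1 ≤ T₂.card := Finset.card_pos.mpr ⟨u1, hu1⟩
        omega
      have hZW : Z.card ≤ W₂.card + 1 := by
        have hsubZ : Z ⊆ insert v W₂ := by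
          intro x hx
          by_cases hxv : x = v
          · exact Finset.mem_insert.mpr (Or.inl hxv)
          · refine Finset.mem_insert.mpr (Or.inr ?_)
            have hadj : G.Adj u1 x := hZadj x hx u1 (hT₂T hu1)
            refine Finset.mem_biUnion.mpr ⟨u1, hu1, ?_⟩
            refine Finset.mem_filter.mpr ⟨Finset.mem_erase.mpr ⟨hxv, ?_⟩, hadj⟩
            exact hAstarX (Finset.mem_sdiff.mp hx).1
        calc Z.card ≤ (insert v W₂).card := Finset.card_le_card hsubZ
          _ = W₂.card + 1 := hWcard
      rcases Nat.le_total (X \ insert v W₂).card (T₂.erase u1).card with hmin | hmin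
      · have : t3 = (X \ insert v W₂).card := by rw [ht3def]; omega
        omega
      · have : t3 = (T₂.erase u1).card := by rw [ht3def]; omega
        omega


end Aux

lemma ceil_fan_eq (k : ℕ) (hk : 1 ≤ k) :
    (⌈3 * (k : ℚ) / 4 - 3 / 2⌉).toNat = (k - 1) / 2 + (k - 1 - (k - 1) / 2) / 2 := by
  set q := (3 * k - 3) / 4 with hqdef
  have h1 : 4 * q + 3 ≤ 3 * k := by omega
  have h2 : 3 * k ≤ 4 * q + 6 := by omega
  have hceil : ⌈3 * (k : ℚ) / 4 - 3 / 2⌉ = (q : ℤ) := by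
    rw [Int.ceil_eq_iff]
    have h1' : (4 * (q:ℚ) + 3) ≤ 3 * (k:ℚ) := by exact_mod_cast h1
    have h2' : (3 * (k:ℚ)) ≤ 4 * (q:ℚ) + 6 := by exact_mod_cast h2
    constructor
    · push_cast
      linarith
    · push_cast
      linarith
  rw [hceil, Int.toNat_natCast]
  omega

/-- Let `k ≥ 1` and let `H` be a graph whose vertex set is the disjoint union of a
set `A` of size `k` inducing a clique and a set `B` of size `k` inducing an empty
graph (so `H` has `2k` vertices). Then `H` or its complement contains the fan
`F_{⌈3k/4 - 3/2⌉}`. -/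
theorem fan_in_half_clique_half_indep (k : ℕ) (hk : 1 ≤ k)
    (V : Type*) [Fintype V] [DecidableEq V] (H : SimpleGraph V) (A B : Finset V)
    (hunion : A ∪ B = Finset.univ) (hdisj : Disjoint A B)
    (hA : A.card = k) (hB : B.card = k)
    (hclique : H.IsClique ↑A) (hindep : Hᶜ.IsClique ↑B) :
    H.HasFan (⌈3 * (k : ℚ) / 4 - 3 / 2⌉.toNat) ∨
    Hᶜ.HasFan (⌈3 * (k : ℚ) / 4 - 3 / 2⌉.toNat) := by
  classical
  have hAne : A.Nonempty := Finset.card_pos.mp (by omega)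
  have hBne : B.Nonempty := Finset.card_pos.mp (by omega)
  set c := (k - 1) / 2 with hcdef
  have key : MatchS H A B c ∨ MatchS Hᶜ B A c := by
    by_contra hcon
    push_neg at hcon
    obtain ⟨hnc1, hnc2⟩ := hcon
    have hc0 : 1 ≤ c := by
      by_contra hc0
      exact hnc1 (by
        have : c = 0 := by omega
        rw [this]
        exact MatchS.zero hAne)
    have hc1 : ∀ t, MatchS H A B t → t ≤ c - 1 := by
      intro t ht
      by_contra hgt
      exact hnc1 (ht.mono (by omega))
    have hc2 : ∀ t, MatchS Hᶜ B A t → t ≤ c - 1 := by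
      intro t ht
      by_contra hgt
      exact hnc2 (ht.mono (by omega))
    have hc1' : ∀ t, MatchS Hᶜᶜ A B t → t ≤ c - 1 := by
      intro t ht
      exact hc1 t (by rwa [compl_compl] at ht)
    obtain ⟨u0, hu0B, hu0min⟩ :=
      B.exists_min_image (fun y => (A.filter (fun x => H.Adj y x)).card) hBne
    obtain ⟨w0, hw0A, hw0min⟩ :=
      A.exists_min_image (fun y => (B.filter (fun x => Hᶜ.Adj y x)).card) hAne
    have hpass1 := pass H A B hdisj k (c-1) (c-1) hA hB u0 hu0B hc1 hc2
    have hpass2 := pass Hᶜ B A hdisj.symm k (c-1) (c-1) hB hA w0 hw0A hc2 hc1'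
    have h2c : 2 * c ≤ k - 1 := by omega
    -- complement degree relation
    have hcompl : ∀ a ∈ A, (B.filter (fun b => Hᶜ.Adj a b)).card
        + (B.filter (fun b => H.Adj a b)).card = k := by
      intro a ha
      have hfc : B.filter (fun b => Hᶜ.Adj a b) = B.filter (fun b => ¬ H.Adj a b) := by
        apply Finset.filter_congr
        intro b hb
        simp only [SimpleGraph.compl_adj, eq_iff_iff]
        constructor
        · exact fun h => h.2
        · intro h
          refine ⟨?_, h⟩
          intro heq
          exact (Finset.disjoint_left.mp hdisj ha) (heq ▸ hb)
      rw [hfc, ← hB, add_comm]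
      exact Finset.card_filter_add_card_filter_not _
    -- double counting
    have hdouble : (∑ b ∈ B, (A.filter (fun x => H.Adj b x)).card)
        = ∑ a ∈ A, (B.filter (fun b => H.Adj a b)).card := by
      have l1 : ∀ b, (A.filter (fun x => H.Adj b x)).card
          = ∑ a ∈ A, if H.Adj b a then 1 else 0 := by
        intro b; rw [Finset.card_filter]
      have l2 : ∀ a, (B.filter (fun b => H.Adj a b)).card
          = ∑ b ∈ B, if H.Adj b a then 1 else 0 := by
        intro a
        rw [Finset.card_filter]
        apply Finset.sum_congr rfl
        intro b _
        congr 1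
        simp [SimpleGraph.adj_comm]
      simp only [l1, l2]
      exact Finset.sum_comm
    have hmin_le : ∀ b ∈ B, (A.filter (fun x => H.Adj u0 x)).card
        ≤ (A.filter (fun x => H.Adj b x)).card := hu0min
    have hmax_ge : ∀ a ∈ A, (B.filter (fun b => H.Adj a b)).card
        ≤ (B.filter (fun b => H.Adj w0 b)).card := by
      intro a ha
      have := hw0min a ha
      have h1 := hcompl a ha
      have h2 := hcompl w0 hw0A
      omega
    have havg1 : B.card * (A.filter (fun x => H.Adj u0 x)).card
        ≤ ∑ b ∈ B, (A.filter (fun x => H.Adj b x)).card := by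
      have := Finset.card_nsmul_le_sum B (fun b => (A.filter (fun x => H.Adj b x)).card)
        ((A.filter (fun x => H.Adj u0 x)).card) hmin_le
      simpa [smul_eq_mul] using this
    have havg2 : ∑ a ∈ A, (B.filter (fun b => H.Adj a b)).card
        ≤ A.card * (B.filter (fun b => H.Adj w0 b)).card := by
      have := Finset.sum_le_card_nsmul A (fun a => (B.filter (fun b => H.Adj a b)).card)
        ((B.filter (fun b => H.Adj w0 b)).card) hmax_ge
      simpa [smul_eq_mul] using this
    have hdle : (A.filter (fun x => H.Adj u0 x)).card
        ≤ (B.filter (fun b => H.Adj w0 b)).card := by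
      have h := le_trans havg1 (le_trans (le_of_eq hdouble) havg2)
      rw [hA, hB] at h
      exact Nat.le_of_mul_le_mul_left h (by omega)
    have hcw0 := hcompl w0 hw0A
    rcases hpass1 with h1 | h1
    · omega
    rcases hpass2 with h2 | h2
    · omega
    omega
  have harith := ceil_fan_eq k hk
  rcases key with h | h
  · left
    have := h.hasFan hdisj hclique
    rw [hA] at this
    rwa [harith]
  · right
    have := h.hasFan hdisj.symm hindep
    rw [hB] at this
    rwa [harith]
end

section
/- Let n ≥ 1, let G be a graph containing no copy of the fan F_n, let A be a clique in G with |A| > n such that every vertex of A has degree greater than 2n in G, and let v ∈ A. Then there exists an independent set S ⊆ N(v) ∖ A such that |S| ≥ |N(S) ∩ A| + d(v) − 2n, where d(v) is the degree of v in G, N(v) is the neighbourhood of v, and N(S) = ∪_{s∈S} N(s). -/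
open Finset

theorem Finset.card_filter_le_card_filter_erase_add_one {α : Type*} [DecidableEq α] (s : Finset α)
    (p : α → Prop) [DecidablePred p] (a : α) : #{x ∈ s | p x} ≤ #{x ∈ s.erase a | p x} + 1 := by
  rw [filter_erase]
  have := pred_card_le_card_erase (s := {x ∈ s | p x}) (a := a)
  omega

namespace SimpleGraph

variable {V : Type*}

/-- A matching of `H`, encoded as the involution that swaps the two ends of every matching edge
and fixes every unmatched vertex. -/
structure IsMatchingInvolution (H : SimpleGraph V) (σ : V → V) : Prop where
  involutive : Function.Involutive σ
  adj : ∀ ⦃v⦄, σ v ≠ v → H.Adj v (σ v)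

def matchingUnion (σ τ : V → V) : SimpleGraph V :=
  SimpleGraph.fromRel fun v c => c = σ v ∨ c = τ v

/-- The subgraph of `G` induced by `B`, kept on the vertex type `V` (unlike `G.induce`) so that
the matchings, walks and distances of all induced subgraphs live on the same type. -/
def inducedOn (G : SimpleGraph V) (B : Finset V) : SimpleGraph V where
  Adj x y := G.Adj x y ∧ x ∈ B ∧ y ∈ B
  symm := ⟨fun _ _ h => ⟨h.1.symm, h.2.2, h.2.1⟩⟩
  loopless := ⟨fun _ h => G.loopless.irrefl _ h.1⟩

variable {G H H' : SimpleGraph V} {B B' : Finset V} {σ τ : V → V} {u v w x y c : V}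

@[simp] lemma inducedOn_adj : (G.inducedOn B).Adj x y ↔ G.Adj x y ∧ x ∈ B ∧ y ∈ B := Iff.rfl

lemma inducedOn_mono (h : B ⊆ B') : G.inducedOn B ≤ G.inducedOn B' :=
  fun _ _ hxy => inducedOn_adj.2 ⟨hxy.1, h hxy.2.1, h hxy.2.2⟩

lemma mem_of_isMatchingInvolution_inducedOn (hσ : (G.inducedOn B).IsMatchingInvolution σ)
    (hu : σ u ≠ u) : u ∈ B :=
  (inducedOn_adj.1 (hσ.adj hu)).2.1

lemma IsMatchingInvolution.mono (h : H.IsMatchingInvolution σ) (hle : H ≤ H') :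
    H'.IsMatchingInvolution σ :=
  ⟨h.involutive, fun _ hv => hle (h.adj hv)⟩

lemma isMatchingInvolution_swap [DecidableEq V] (h : H.Adj u w) :
    H.IsMatchingInvolution (Equiv.swap u w) := by
  refine ⟨Equiv.swap_apply_self u w, fun v hv => ?_⟩
  rcases eq_or_ne v u with rfl | hvu
  · simpa using h
  rcases eq_or_ne v w with rfl | hvw
  · simpa using h.symm
  · exact absurd (Equiv.swap_apply_of_ne_of_ne hvu hvw) hv

lemma IsMatchingInvolution.piecewise [DecidableEq V] (hσ : H.IsMatchingInvolution σ)
    (hτ : H.IsMatchingInvolution τ) {P : Finset V} (hσP : ∀ v ∈ P, σ v ∈ P)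
    (hτP : ∀ v ∈ P, τ v ∈ P) : H.IsMatchingInvolution (P.piecewise τ σ) := by
  refine ⟨fun v => ?_, fun v hv => ?_⟩
  · by_cases hv : v ∈ P
    · simp [hv, hτP v hv, hτ.involutive v]
    · have hσv : σ v ∉ P := fun h => hv (hσ.involutive v ▸ hσP _ h)
      simp [hv, hσv, hσ.involutive v]
  · by_cases hvP : v ∈ P
    · simp only [Finset.piecewise_eq_of_mem _ _ _ hvP] at hv ⊢
      exact hτ.adj hv
    · simp only [Finset.piecewise_eq_of_notMem _ _ _ hvP] at hv ⊢
      exact hσ.adj hv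

lemma matchingUnion_adj (hσ : Function.Involutive σ) (hτ : Function.Involutive τ)
    (h : (matchingUnion σ τ).Adj v w) : w = σ v ∨ w = τ v := by
  obtain ⟨-, h | rfl | rfl⟩ := h
  · exact h
  · exact Or.inl (hσ w).symm
  · exact Or.inr (hτ w).symm

lemma matchingUnion_adj_left (h : σ v ≠ v) : (matchingUnion σ τ).Adj v (σ v) :=
  ⟨h.symm, Or.inl (Or.inl rfl)⟩

lemma matchingUnion_adj_right (h : τ v ≠ v) : (matchingUnion σ τ).Adj v (τ v) :=
  ⟨h.symm, Or.inl (Or.inr rfl)⟩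

lemma neighborSet_matchingUnion_subset (hσ : Function.Involutive σ) (hτ : Function.Involutive τ) :
    (matchingUnion σ τ).neighborSet v ⊆ {σ v, τ v} :=
  fun _ h => matchingUnion_adj hσ hτ h

lemma subsingleton_neighborSet_matchingUnion_of_left (hσ : Function.Involutive σ)
    (hτ : Function.Involutive τ) (hv : σ v = v) :
    ((matchingUnion σ τ).neighborSet v).Subsingleton :=
  Set.subsingleton_singleton.anti fun c hc => by
    rcases matchingUnion_adj hσ hτ hc with rfl | rfl
    · exact absurd hv.symm ((mem_neighborSet _ _ _).1 hc).ne
    · rfl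

lemma subsingleton_neighborSet_matchingUnion_of_right (hσ : Function.Involutive σ)
    (hτ : Function.Involutive τ) (hv : τ v = v) :
    ((matchingUnion σ τ).neighborSet v).Subsingleton :=
  Set.subsingleton_singleton.anti fun c hc => by
    rcases matchingUnion_adj hσ hτ hc with rfl | rfl
    · rfl
    · exact absurd hv.symm ((mem_neighborSet _ _ _).1 hc).ne

lemma Reachable.mem_of_forall_adj_mem {s : Set V} (hs : ∀ a ∈ s, ∀ b, H.Adj a b → b ∈ s)
    (hx : x ∈ s) (h : H.Reachable x y) : y ∈ s := by
  obtain ⟨p⟩ := h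
  induction p with
  | nil => exact hx
  | cons hadj _ ih => exact ih (hs _ hx _ hadj)

lemma Walk.IsPath.getVert_pred_ne_getVert_succ {p : H.Walk x y} (hp : p.IsPath) {i : ℕ}
    (hi : i < p.length) : p.getVert (i - 1) ≠ p.getVert (i + 1) := fun h => by
  have := hp.getVert_injOn (by simp; omega) (by simp; omega) h
  omega

lemma Walk.adj_getVert_pred {p : H.Walk x y} {i : ℕ} (h0 : 0 < i) (hi : i ≤ p.length) :
    H.Adj (p.getVert i) (p.getVert (i - 1)) := by
  have := p.adj_getVert_succ (i := i - 1) (by omega)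
  rw [Nat.sub_add_cancel h0] at this
  exact this.symm

/-- In a graph of maximum degree two, a path joining two vertices of degree at most one is a whole
connected component, and its inner vertices have degree two. -/
theorem Reachable.eq_or_eq_of_subsingleton_neighborSet
    (hdeg : ∀ v, ∃ a b, H.neighborSet v ⊆ {a, b}) (hx : (H.neighborSet x).Subsingleton)
    (hy : (H.neighborSet y).Subsingleton) (hc : (H.neighborSet c).Subsingleton) (hxy : H.Reachable x y) (hne : x ≠ y)
    (hxc : H.Reachable x c) : c = x ∨ c = y := by
  obtain ⟨p, hp⟩ := hxy.exists_isPath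
  have hlen : 0 < p.length := by
    by_contra h
    exact hne (p.eq_of_length_eq_zero (by omega))
  have hclosed : ∀ a ∈ p.support, ∀ b, H.Adj a b → b ∈ p.support := by
    intro a ha b hab
    obtain ⟨i, rfl, hi⟩ := Walk.mem_support_iff_exists_getVert.1 ha
    rcases Nat.eq_zero_or_pos i with rfl | h0
    · rw [p.getVert_zero] at hab
      rw [hx hab (by simpa using p.adj_getVert_succ hlen)]
      exact p.getVert_mem_support 1
    rcases hi.eq_or_lt with rfl | hi
    · rw [p.getVert_length] at hab
      rw [hy hab (by simpa using p.adj_getVert_pred hlen le_rfl)]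
      exact p.getVert_mem_support _
    obtain ⟨a', b', hab'⟩ := hdeg (p.getVert i)
    have h₁ := hab' (p.adj_getVert_pred h0 hi.le)
    have h₂ := hab' (p.adj_getVert_succ hi)
    have h₃ := hab' hab
    have hne' := hp.getVert_pred_ne_getVert_succ hi
    simp only [Set.mem_insert_iff, Set.mem_singleton_iff] at h₁ h₂ h₃
    have : b = p.getVert (i - 1) ∨ b = p.getVert (i + 1) := by grind
    rcases this with rfl | rfl <;> exact p.getVert_mem_support _
  obtain ⟨j, rfl, hj⟩ :=
    Walk.mem_support_iff_exists_getVert.1 <|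
      hxc.mem_of_forall_adj_mem (s := {a | a ∈ p.support}) hclosed p.start_mem_support
  rcases Nat.eq_zero_or_pos j with rfl | h0
  · exact Or.inl p.getVert_zero
  rcases hj.eq_or_lt with rfl | hj
  · exact Or.inr p.getVert_length
  exact absurd (hc (p.adj_getVert_pred h0 hj.le) (p.adj_getVert_succ hj))
    (hp.getVert_pred_ne_getVert_succ hj)


variable [Fintype V] [DecidableEq V]

def matchedVerts (σ : V → V) : Finset V := {v | σ v ≠ v}

@[simp] lemma mem_matchedVerts : v ∈ matchedVerts σ ↔ σ v ≠ v := by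
  simp [matchedVerts]

lemma card_matchedVerts_piecewise (P : Finset V) (σ τ : V → V) :
    #(matchedVerts (P.piecewise τ σ)) = #(matchedVerts τ ∩ P) + #(matchedVerts σ \ P) := by
  have hdisj : Disjoint (matchedVerts τ ∩ P) (matchedVerts σ \ P) :=
    Finset.disjoint_left.2 fun _ h₁ h₂ => (mem_sdiff.1 h₂).2 (mem_inter.1 h₁).2
  rw [← card_union_of_disjoint hdisj]
  congr 1
  ext v
  by_cases hv : v ∈ P <;> simp [hv]

/-- `L` takes from each matched pair the end that comes first in an enumeration of `V`. -/
lemma _root_.Function.Involutive.exists_half_matchedVerts (hσ : Function.Involutive σ) :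
    ∃ L ⊆ matchedVerts σ, (∀ v ∈ L, σ v ∉ L) ∧ #(matchedVerts σ) = 2 * #L := by
  let f := Fintype.equivFin V
  refine ⟨{v ∈ matchedVerts σ | f v < f (σ v)}, filter_subset _ _, fun v hv hσv => ?_, ?_⟩
  · simp only [mem_filter, hσ v] at hv hσv
    exact lt_asymm hv.2 hσv.2
  · set L := {v ∈ matchedVerts σ | f v < f (σ v)}
    have hsplit : matchedVerts σ = L ∪ L.image σ := by
      ext v
      simp only [mem_union, mem_image, mem_filter, L, mem_matchedVerts]
      constructor
      · intro hv
        rcases lt_or_gt_of_ne (f.injective.ne hv.symm) with h | h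
        · exact Or.inl ⟨hv, h⟩
        · refine Or.inr ⟨σ v, ⟨?_, ?_⟩, hσ v⟩ <;> rw [hσ v]
          exacts [hv.symm, h]
      · rintro (⟨hv, -⟩ | ⟨x, ⟨hx, -⟩, rfl⟩)
        · exact hv
        · rw [hσ x]; exact hx.symm
    have hdisj : Disjoint L (L.image σ) := Finset.disjoint_left.2 fun v hv hv' => by
      obtain ⟨x, hx, rfl⟩ := mem_image.1 hv'
      simp only [mem_filter, L, hσ x] at hx hv
      exact lt_asymm hx.2 hv.2
    rw [hsplit, card_union_of_disjoint hdisj, card_image_of_injective _ hσ.injective]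
    ring

lemma _root_.Function.Involutive.even_card_matchedVerts (hσ : Function.Involutive σ) :
    Even #(matchedVerts σ) := by
  obtain ⟨L, -, -, h⟩ := hσ.exists_half_matchedVerts
  exact ⟨#L, by omega⟩

/-- Twice the matching number. -/
noncomputable def maxMatchedCard (H : SimpleGraph V) : ℕ :=
  sSup {k | ∃ σ, H.IsMatchingInvolution σ ∧ #(matchedVerts σ) = k}

def IsMaxMatchingInvolution (H : SimpleGraph V) (σ : V → V) : Prop :=
  H.IsMatchingInvolution σ ∧ #(matchedVerts σ) = H.maxMatchedCard

lemma bddAbove_card_matchedVerts (H : SimpleGraph V) :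
    BddAbove {k | ∃ σ, H.IsMatchingInvolution σ ∧ #(matchedVerts σ) = k} :=
  ⟨Fintype.card V, by rintro _ ⟨σ, -, rfl⟩; exact card_le_univ _⟩

lemma IsMatchingInvolution.card_matchedVerts_le (h : H.IsMatchingInvolution σ) :
    #(matchedVerts σ) ≤ H.maxMatchedCard :=
  le_csSup (bddAbove_card_matchedVerts H) ⟨σ, h, rfl⟩

lemma exists_isMaxMatchingInvolution (H : SimpleGraph V) : ∃ σ, H.IsMaxMatchingInvolution σ :=
  Nat.sSup_mem (s := {k | ∃ σ, H.IsMatchingInvolution σ ∧ #(matchedVerts σ) = k})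
    ⟨0, id, ⟨fun _ => rfl, fun _ h => absurd rfl h⟩, by simp [matchedVerts]⟩
    (bddAbove_card_matchedVerts H)

lemma even_maxMatchedCard (H : SimpleGraph V) : Even H.maxMatchedCard := by
  obtain ⟨σ, hσ, hcard⟩ := H.exists_isMaxMatchingInvolution
  exact hcard ▸ hσ.involutive.even_card_matchedVerts

lemma IsMaxMatchingInvolution.not_adj (hσ : H.IsMaxMatchingInvolution σ) (hu : σ u = u)
    (hw : σ w = w) : ¬ H.Adj u w := by
  intro huw
  have hP : ∀ x ∈ ({u, w} : Finset V), σ x ∈ ({u, w} : Finset V) := by simp [hu, hw]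
  have hswap : ∀ x ∈ ({u, w} : Finset V), Equiv.swap u w x ∈ ({u, w} : Finset V) := by
    simp [Equiv.swap_apply_left, Equiv.swap_apply_right]
  have hle := (hσ.1.piecewise (isMatchingInvolution_swap huw) hP hswap).card_matchedVerts_le
  have h1 : matchedVerts (Equiv.swap u w) ∩ {u, w} = {u, w} := by
    ext x
    constructor
    · exact fun h => (mem_inter.1 h).2
    · intro hx
      simp only [Finset.mem_insert, Finset.mem_singleton] at hx
      rcases hx with rfl | rfl <;> simp [huw.ne, huw.ne.symm]
  have h2 : matchedVerts σ \ {u, w} = matchedVerts σ :=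
    sdiff_eq_self_of_disjoint (by simp [hu, hw])
  rw [card_matchedVerts_piecewise, h1, h2, card_pair huw.ne, hσ.2] at hle
  omega

lemma IsMaxMatchingInvolution.piecewise (hσ : H.IsMaxMatchingInvolution σ)
    (hτ : H.IsMaxMatchingInvolution τ) {P : Finset V} (hσP : ∀ v ∈ P, σ v ∈ P)
    (hτP : ∀ v ∈ P, τ v ∈ P) : H.IsMaxMatchingInvolution (P.piecewise τ σ) := by
  have h₀ := hσ.1.piecewise hτ.1 hσP hτP
  refine ⟨h₀, le_antisymm h₀.card_matchedVerts_le ?_⟩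
  have h₁ := (hτ.1.piecewise hσ.1 hτP hσP).card_matchedVerts_le
  rw [card_matchedVerts_piecewise] at h₁ ⊢
  have hσc := card_inter_add_card_sdiff (matchedVerts σ) P
  have hτc := card_inter_add_card_sdiff (matchedVerts τ) P
  rw [hσ.2] at hσc
  rw [hτ.2] at hτc
  omega


/-- **Gallai's lemma**, componentwise. For a counterexample `u, w` at minimal distance, let `z` be
the neighbour of `u` on a shortest path and `τ` a maximum matching missing `z`. Exchanging `σ` and
`τ` on the component `P` of `u` in their union keeps both maximum; this component is a path ending
at `u`, so it does not contain both `z` and `w`. If `z ∈ P` the exchanged `σ` misses `z` and `w`,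
which are closer than `u` and `w`; otherwise the exchanged `τ` misses the adjacent `u` and `z`. -/
theorem IsMaxMatchingInvolution.eq_of_reachable
    (hall : ∀ v, ∃ τ, H.IsMaxMatchingInvolution τ ∧ τ v = v) (hσ : H.IsMaxMatchingInvolution σ)
    (hu : σ u = u) (hw : σ w = w) (huw : H.Reachable u w) : u = w := by
  classical
  induction hd : H.dist u w using Nat.strong_induction_on generalizing σ u w with
  | _ d ih =>
  by_contra hne
  obtain ⟨p, hp⟩ := huw.exists_walk_length_eq_dist
  cases p with
  | nil => exact hne rfl
  | @cons _ z _ huz q =>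
  have hzw : z ≠ w := by
    rintro rfl
    exact hσ.not_adj hu hw huz
  obtain ⟨τ, hτ, hτz⟩ := hall z
  have hinv := hσ.1.involutive
  have hinv' := hτ.1.involutive
  let P : Finset V := {x | (matchingUnion σ τ).Reachable u x}
  have hσP : ∀ x ∈ P, σ x ∈ P := fun x hx => by
    simp only [P, mem_filter, mem_univ, true_and] at hx ⊢
    by_cases h : σ x = x
    · rwa [h]
    · exact hx.trans (matchingUnion_adj_left h).reachable
  have hτP : ∀ x ∈ P, τ x ∈ P := fun x hx => by
    simp only [P, mem_filter, mem_univ, true_and] at hx ⊢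
    by_cases h : τ x = x
    · rwa [h]
    · exact hx.trans (matchingUnion_adj_right h).reachable
  have huP : u ∈ P := by simp [P]
  by_cases hzP : z ∈ P
  · have hwP : w ∉ P := fun hwP => by
      simp only [P, mem_filter, mem_univ, true_and] at hzP hwP
      rcases hzP.eq_or_eq_of_subsingleton_neighborSet
          (fun x => ⟨σ x, τ x, neighborSet_matchingUnion_subset hinv hinv'⟩)
          (subsingleton_neighborSet_matchingUnion_of_left hinv hinv' hu)
          (subsingleton_neighborSet_matchingUnion_of_right hinv hinv' hτz)
          (subsingleton_neighborSet_matchingUnion_of_left hinv hinv' hw) huz.ne hwP with h | h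
      exacts [hne h.symm, hzw h.symm]
    have hdist : H.dist z w < d := by
      have := SimpleGraph.dist_le q
      rw [Walk.length_cons] at hp
      omega
    exact hzw (ih _ hdist (hσ.piecewise hτ hσP hτP) (by simp [hzP, hτz]) (by simp [hwP, hw])
      ⟨q⟩ rfl)
  · exact (hτ.piecewise hσ hτP hσP).not_adj (by simp [huP, hu]) (by simp [hzP, hτz]) huz

lemma maxMatchedCard_inducedOn_erase_add_two_le
    (hu : ∀ σ, (G.inducedOn B).IsMaxMatchingInvolution σ → σ u ≠ u) :
    (G.inducedOn (B.erase u)).maxMatchedCard + 2 ≤ (G.inducedOn B).maxMatchedCard := by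
  obtain ⟨σ, hσ⟩ := (G.inducedOn (B.erase u)).exists_isMaxMatchingInvolution
  have hσB := hσ.1.mono (inducedOn_mono (erase_subset u B))
  have hσu : σ u = u := by
    by_contra h
    exact notMem_erase u B (mem_of_isMatchingInvolution_inducedOn hσ.1 h)
  have hlt : #(matchedVerts σ) < (G.inducedOn B).maxMatchedCard :=
    hσB.card_matchedVerts_le.lt_of_ne fun h => hu σ ⟨hσB, h⟩ hσu
  obtain ⟨a, ha⟩ := (G.inducedOn B).even_maxMatchedCard
  obtain ⟨b, hb⟩ := (G.inducedOn (B.erase u)).even_maxMatchedCard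
  rw [hσ.2] at hlt
  omega

variable [DecidableRel G.Adj]

theorem exists_isIndepSet_of_forall_exists_unmatched
    (hall : ∀ u ∈ B, ∃ σ, (G.inducedOn B).IsMaxMatchingInvolution σ ∧ σ u = u) {X : Finset V}
    (hXB : X ⊆ B) (hX : G.IsClique (X : Set V)) :
    ∃ S ⊆ B \ X, G.IsIndepSet (S : Set V) ∧
      #B + #{x ∈ X | ∃ s ∈ S, G.Adj s x} ≤ #S + (G.inducedOn B).maxMatchedCard + 1 := by
  classical
  set H := G.inducedOn B
  have hall' : ∀ u, ∃ σ, H.IsMaxMatchingInvolution σ ∧ σ u = u := fun u => by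
    by_cases hu : u ∈ B
    · exact hall u hu
    · obtain ⟨σ, hσ⟩ := H.exists_isMaxMatchingInvolution
      exact ⟨σ, hσ, by_contra fun h => hu (mem_of_isMatchingInvolution_inducedOn hσ.1 h)⟩
  obtain ⟨σ, hσ⟩ := H.exists_isMaxMatchingInvolution
  have hmB : matchedVerts σ ⊆ B := fun x hx =>
    mem_of_isMatchingInvolution_inducedOn hσ.1 (mem_matchedVerts.1 hx)
  have hXreach : ∀ x ∈ X, ∀ y ∈ X, H.Reachable x y := fun x hx y hy => by
    rcases eq_or_ne x y with rfl | hxy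
    · rfl
    · exact Adj.reachable (inducedOn_adj.2 ⟨hX hx hy hxy, hXB hx, hXB hy⟩)
  set U := B \ matchedVerts σ
  set S := {b ∈ U | ∀ x ∈ X, ¬ H.Reachable x b}
  -- Gallai's lemma: the component of `X` contains at most one unmatched vertex.
  have hE : #{b ∈ U | ¬ ∀ x ∈ X, ¬ H.Reachable x b} ≤ 1 := by
    refine card_le_one.2 fun b hb c hc => ?_
    simp only [mem_filter, U, mem_sdiff, mem_matchedVerts, not_not, not_forall] at hb hc
    obtain ⟨⟨-, hbσ⟩, x, hx, hxb⟩ := hb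
    obtain ⟨⟨-, hcσ⟩, y, hy, hyc⟩ := hc
    exact hσ.eq_of_reachable hall' hbσ hcσ (hxb.symm.trans ((hXreach x hx y hy).trans hyc))
  have hS : #S + #{b ∈ U | ¬ ∀ x ∈ X, ¬ H.Reachable x b} = #U :=
    card_filter_add_card_filter_not _
  have hU : #U = #B - #(matchedVerts σ) := card_sdiff_of_subset hmB
  have hNX : #{x ∈ X | ∃ s ∈ S, G.Adj s x} = 0 := by
    refine card_eq_zero.2 (filter_eq_empty_iff.2 fun x hx ⟨s, hs, hsx⟩ => ?_)
    simp only [mem_filter, S, U, mem_sdiff] at hs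
    exact hs.2 x hx (Adj.reachable (inducedOn_adj.2 ⟨hsx.symm, hXB hx, hs.1.1⟩))
  refine ⟨S, fun b hb => ?_, fun b hb c hc hbc hadj => ?_, ?_⟩
  · simp only [mem_filter, S, U, mem_sdiff] at hb
    exact mem_sdiff.2 ⟨hb.1.1, fun hbX => hb.2 b hbX (Reachable.refl b)⟩
  · simp only [coe_filter, S, U, mem_sdiff, mem_matchedVerts, not_not, Set.mem_ofPred_eq] at hb hc
    exact hσ.not_adj hb.1.2 hc.1.2 (inducedOn_adj.2 ⟨hadj, hb.1.1, hc.1.1⟩)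
  · have := card_le_card hmB
    rw [hσ.2] at hU this
    omega

theorem exists_isIndepSet_large_deficiency (B : Finset V) {X : Finset V} (hXB : X ⊆ B)
    (hX : G.IsClique (X : Set V)) :
    ∃ S ⊆ B \ X, G.IsIndepSet (S : Set V) ∧
      #B + #{x ∈ X | ∃ s ∈ S, G.Adj s x} ≤ #S + (G.inducedOn B).maxMatchedCard + 1 := by
  induction B using Finset.strongInduction generalizing X with
  | H B ih =>
  by_cases hess : ∃ u ∈ B, ∀ σ, (G.inducedOn B).IsMaxMatchingInvolution σ → σ u ≠ u
  · obtain ⟨u, hu, hess⟩ := hess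
    obtain ⟨S, hS, hind, hcard⟩ := ih (B.erase u) (erase_ssubset hu) (erase_subset_erase u hXB)
      (hX.subset (coe_subset.2 (erase_subset u X)))
    refine ⟨S, fun s hs => ?_, hind, ?_⟩
    · obtain ⟨hsB, hsX⟩ := mem_sdiff.1 (hS hs)
      exact mem_sdiff.2 ⟨mem_of_mem_erase hsB, fun h => hsX (mem_erase.2 ⟨ne_of_mem_erase hsB, h⟩)⟩
    · have := maxMatchedCard_inducedOn_erase_add_two_le hess
      have := card_filter_le_card_filter_erase_add_one X (fun x => ∃ s ∈ S, G.Adj s x) u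
      have := card_erase_add_one hu
      omega
  · push Not at hess
    exact exists_isIndepSet_of_forall_exists_unmatched hess hXB hX

theorem maxMatchedCard_inducedOn_neighborFinset_add_two_le {n : ℕ} (hfan : ¬ G.HasFan n)
    (v : V) : (G.inducedOn (G.neighborFinset v)).maxMatchedCard + 2 ≤ 2 * n := by
  obtain ⟨σ, hσ⟩ := (G.inducedOn (G.neighborFinset v)).exists_isMaxMatchingInvolution
  obtain ⟨L, hLm, hLσ, hcard⟩ := hσ.1.involutive.exists_half_matchedVerts
  suffices #L < n by rw [← hσ.2, hcard]; omega
  by_contra! hn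
  obtain ⟨e⟩ : Nonempty (Fin n ↪ L) := Function.Embedding.nonempty_of_card_le (by simpa using hn)
  have he : Function.Injective fun i => (e i : V) := Subtype.val_injective.comp e.injective
  have hadj i : (G.inducedOn (G.neighborFinset v)).Adj (e i) (σ (e i)) :=
    hσ.1.adj (mem_matchedVerts.1 (hLm (e i).2))
  refine hfan ⟨v, fun i => e i, fun i => σ (e i), he.sumElim (hσ.1.involutive.injective.comp he)
    fun i j h => hLσ _ (e j).2 (h ▸ (e i).2), fun i => ?_⟩
  simp only [inducedOn_adj, mem_neighborFinset] at hadj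
  exact ⟨(hadj i).2.1, (hadj i).2.2, (hadj i).1⟩

end SimpleGraph

theorem exists_large_deficiency_set_general (n : ℕ)
    (V : Type*) [Fintype V]
    (G : SimpleGraph V) [DecidableRel G.Adj]
    (hfan : ¬ G.HasFan n)
    (A : Finset V) (hA : G.IsClique ↑A)
    (v : V) (hv : v ∈ A) :
    ∃ S : Finset V, (↑S : Set V) ⊆ G.neighborSet v \ ↑A ∧
      Gᶜ.IsClique ↑S ∧
      ((A.filter fun a => ∃ s ∈ S, G.Adj s a).card : ℤ) + G.degree v - 2 * n ≤
        (S.card : ℤ) := by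
  classical
  have hXB : A.erase v ⊆ G.neighborFinset v := fun a ha =>
    (G.mem_neighborFinset v a).2 (hA hv (mem_of_mem_erase ha) (ne_of_mem_erase ha).symm)
  obtain ⟨S, hS, hind, hcard⟩ := SimpleGraph.exists_isIndepSet_large_deficiency _ hXB
    (hA.subset (coe_subset.2 (erase_subset v A)))
  have hmatch := SimpleGraph.maxMatchedCard_inducedOn_neighborFinset_add_two_le hfan v
  have hA' := card_filter_le_card_filter_erase_add_one A (fun a => ∃ s ∈ S, G.Adj s a) v
  refine ⟨S, fun s hs => ?_, G.isClique_compl.2 hind, ?_⟩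
  · obtain ⟨hsN, hsX⟩ := mem_sdiff.1 (hS hs)
    have hvs : G.Adj v s := (G.mem_neighborFinset v s).1 hsN
    exact ⟨hvs, fun hsA => hsX (mem_erase.2 ⟨hvs.ne', hsA⟩)⟩
  · rw [← G.card_neighborFinset_eq_degree v]
    omega

/-- If `G` contains no fan `F_n`, `A` is a clique in `G` with `|A| > n` all of whose
vertices have degree greater than `2n`, and `v ∈ A`, then there is an independent
set `S ⊆ N(v) \ A` with `|S| ≥ |N(S) ∩ A| + d(v) - 2n`. -/
theorem exists_large_deficiency_set (n : ℕ) (hn : 1 ≤ n)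
    (V : Type*) [Fintype V] [DecidableEq V]
    (G : SimpleGraph V) [DecidableRel G.Adj]
    (hfan : ¬ G.HasFan n)
    (A : Finset V) (hA : G.IsClique ↑A) (hAcard : n < A.card)
    (hdeg : ∀ a ∈ A, 2 * n < G.degree a)
    (v : V) (hv : v ∈ A) :
    ∃ S : Finset V, (↑S : Set V) ⊆ G.neighborSet v \ ↑A ∧
      Gᶜ.IsClique ↑S ∧
      ((A.filter fun a => ∃ s ∈ S, G.Adj s a).card : ℤ) + G.degree v - 2 * n ≤
        (S.card : ℤ) :=
  exists_large_deficiency_set_general n V G hfan A hA v hv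
end

section
/- Let k ≥ 2 and let H be a graph on 2k vertices whose vertex set is the disjoint union of a clique A of size k and an independent set B of size k. Let z ∈ A, and suppose there is a matching M in H between N(z) ∩ B and A ∖ {z} (i.e. a set of pairwise disjoint edges of H, each with one endpoint in N(z) ∩ B and the other in A ∖ {z}) with |M| ≥ k/2. Then H contains a copy of the fan F_{⌈3k/4 − 3/2⌉} with centre z. -/
/-- `G.HasFanOn n v` means `G` contains a copy of the fan `F_n` centred at `v`:
there are `2n` further distinct vertices such that each pair `a i, b i` forms a
triangle with `v`. -/
def SimpleGraph.HasFanOn {V : Type*} (G : SimpleGraph V) (n : ℕ) (v : V) : Prop :=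
  ∃ (a b : Fin n → V),
    Function.Injective (Sum.elim a b) ∧
    ∀ i, G.Adj v (a i) ∧ G.Adj v (b i) ∧ G.Adj (a i) (b i)

theorem SimpleGraph.HasFanOn.mono {V : Type*} {G : SimpleGraph V} {N n : ℕ} {v : V}
    (h : G.HasFanOn N v) (hn : n ≤ N) : G.HasFanOn n v := by
  obtain ⟨a, b, hinj, hadj⟩ := h
  refine ⟨a ∘ Fin.castLE hn, b ∘ Fin.castLE hn, ?_, fun i => hadj _⟩
  rintro (x | x) (y | y) hxy <;>
    simp only [Sum.elim_inl, Sum.elim_inr, Function.comp_apply] at hxy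
  · have := hinj (show Sum.elim a b (.inl (Fin.castLE hn x)) = Sum.elim a b (.inl (Fin.castLE hn y)) from hxy)
    simp only [Sum.inl.injEq] at this
    exact congrArg Sum.inl (Fin.castLE_injective hn this)
  · have := hinj (show Sum.elim a b (.inl (Fin.castLE hn x)) = Sum.elim a b (.inr (Fin.castLE hn y)) from hxy)
    simp at this
  · have := hinj (show Sum.elim a b (.inr (Fin.castLE hn x)) = Sum.elim a b (.inl (Fin.castLE hn y)) from hxy)
    simp at this
  · have := hinj (show Sum.elim a b (.inr (Fin.castLE hn x)) = Sum.elim a b (.inr (Fin.castLE hn y)) from hxy)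
    simp only [Sum.inr.injEq] at this
    exact congrArg Sum.inr (Fin.castLE_injective hn this)

/-- Let `H` be a graph on `2k` vertices (`k ≥ 2`) whose vertex set is the disjoint
union of a clique `A` of size `k` and an independent set `B` of size `k`. If `z ∈ A`
and there is a matching in `H` of size at least `k/2` between `N(z) ∩ B` and
`A \ {z}`, then `H` contains the fan `F_{⌈3k/4 - 3/2⌉}` centred at `z`. -/
theorem fan_centred_of_matching (k : ℕ) (hk : 2 ≤ k)
    (V : Type*) [Fintype V] [DecidableEq V] (H : SimpleGraph V)
    (A B : Finset V)
    (hunion : A ∪ B = Finset.univ) (hdisj : Disjoint A B)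
    (hA : A.card = k) (hB : B.card = k)
    (hclique : H.IsClique ↑A) (hindep : Hᶜ.IsClique ↑B)
    (z : V) (hz : z ∈ A)
    (m : ℕ) (a b : Fin m → V)
    (hinj : Function.Injective (Sum.elim a b))
    (hends : ∀ i, (a i ∈ B ∧ H.Adj z (a i)) ∧ (b i ∈ A ∧ b i ≠ z) ∧ H.Adj (a i) (b i))
    (hm : (k : ℚ) / 2 ≤ (m : ℚ)) :
    H.HasFanOn (⌈3 * (k : ℚ) / 4 - 3 / 2⌉.toNat) z := by
  classical
  -- basic injectivity facts
  have hainj : ∀ {i j : Fin m}, a i = a j → i = j := by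
    intro i j h
    have := hinj (show Sum.elim a b (.inl i) = Sum.elim a b (.inl j) from h)
    simpa using this
  have hbinj : Function.Injective b := by
    intro i j h
    have := hinj (show Sum.elim a b (.inr i) = Sum.elim a b (.inr j) from h)
    simpa using this
  have habne : ∀ i j : Fin m, a i ≠ b j := by
    intro i j h
    have := hinj (show Sum.elim a b (.inl i) = Sum.elim a b (.inr j) from h)
    simp at this
  -- membership facts
  have haB : ∀ i, a i ∈ B := fun i => ((hends i).1).1
  have hbA : ∀ i, b i ∈ A.erase z :=
    fun i => Finset.mem_erase.2 ⟨((hends i).2.1).2, ((hends i).2.1).1⟩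
  -- the leftover set S
  set S : Finset V := (A.erase z) \ (Finset.image b Finset.univ) with hS
  have hbsub : Finset.image b Finset.univ ⊆ A.erase z := by
    intro x hx
    obtain ⟨i, _, rfl⟩ := Finset.mem_image.1 hx
    exact hbA i
  have hcardim : (Finset.image b Finset.univ).card = m := by
    rw [Finset.card_image_of_injective _ hbinj, Finset.card_univ, Fintype.card_fin]
  have hcarderase : (A.erase z).card = k - 1 := by
    rw [Finset.card_erase_of_mem hz, hA]
  have hmk1 : m + 1 ≤ k := by
    have := Finset.card_le_card hbsub
    rw [hcardim, hcarderase] at this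
    omega
  have hScard : S.card = k - 1 - m := by
    rw [hS, Finset.card_sdiff_of_subset hbsub, hcardim, hcarderase]
  -- enumeration of S
  set f : Fin S.card → V := fun i => ((S.equivFin.symm i : S) : V) with hf
  have hfmem : ∀ i, f i ∈ S := fun i => Finset.coe_mem _
  have hfinj : Function.Injective f := by
    intro i j h
    exact S.equivFin.symm.injective (Subtype.ext h)
  have hfA : ∀ i, f i ∈ A.erase z := fun i => (Finset.mem_sdiff.1 (hfmem i)).1
  have hfnB : ∀ i, f i ∉ B := fun i =>
    Finset.disjoint_left.1 hdisj (Finset.mem_of_mem_erase (hfA i))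
  have hbfne : ∀ (i : Fin m) j, b i ≠ f j := by
    intro i j h
    exact (Finset.mem_sdiff.1 (hfmem j)).2
      (h ▸ Finset.mem_image_of_mem b (Finset.mem_univ i))
  have hafne : ∀ (i : Fin m) j, a i ≠ f j := by
    intro i j h
    exact hfnB j (h ▸ haB i)
  set t : ℕ := (k - 1 - m) / 2 with ht
  -- index bounds
  have hidx : ∀ i : Fin (m + t), ¬ (i : ℕ) < m → 2 * ((i : ℕ) - m) + 1 < S.card := by
    intro i hi
    have := i.isLt
    omega
  -- the fan maps
  set a' : Fin (m + t) → V := fun i =>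
    if h : (i : ℕ) < m then a ⟨i, h⟩ else f ⟨2 * ((i : ℕ) - m), by
      have := hidx i h; omega⟩ with ha'
  set b' : Fin (m + t) → V := fun i =>
    if h : (i : ℕ) < m then b ⟨i, h⟩ else f ⟨2 * ((i : ℕ) - m) + 1, hidx i h⟩ with hb'
  have hfan : H.HasFanOn (m + t) z := by
    refine ⟨a', b', ?_, ?_⟩
    · rintro (x | x) (y | y) hxy <;>
        simp only [Sum.elim_inl, Sum.elim_inr, ha', hb'] at hxy <;>
        [skip; skip; skip; skip]
      · by_cases hx : (x : ℕ) < m <;> by_cases hy : (y : ℕ) < m <;>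
          simp only [hx, hy, dif_pos, dif_neg, not_false_iff] at hxy
        · have := hainj hxy; rw [Fin.mk.injEq] at this
          exact congrArg Sum.inl (Fin.ext this)
        · exact absurd hxy (hafne _ _)
        · exact absurd hxy.symm (hafne _ _)
        · have := hfinj hxy
          rw [Fin.mk.injEq] at this
          have h2 := this
          exact congrArg Sum.inl (Fin.ext (by omega))
      · by_cases hx : (x : ℕ) < m <;> by_cases hy : (y : ℕ) < m <;>
          simp only [hx, hy, dif_pos, dif_neg, not_false_iff] at hxy
        · exact absurd hxy (habne _ _)
        · exact absurd hxy (hafne _ _)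
        · exact absurd hxy.symm (hbfne _ _)
        · have := hfinj hxy
          rw [Fin.mk.injEq] at this
          have h2 := this
          omega
      · by_cases hx : (x : ℕ) < m <;> by_cases hy : (y : ℕ) < m <;>
          simp only [hx, hy, dif_pos, dif_neg, not_false_iff] at hxy
        · exact absurd hxy.symm (habne _ _)
        · exact absurd hxy (hbfne _ _)
        · exact absurd hxy.symm (hafne _ _)
        · have := hfinj hxy
          rw [Fin.mk.injEq] at this
          have h2 := this
          omega
      · by_cases hx : (x : ℕ) < m <;> by_cases hy : (y : ℕ) < m <;>
          simp only [hx, hy, dif_pos, dif_neg, not_false_iff] at hxy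
        · have := hbinj hxy; rw [Fin.mk.injEq] at this
          exact congrArg Sum.inr (Fin.ext this)
        · exact absurd hxy (hbfne _ _)
        · exact absurd hxy.symm (hbfne _ _)
        · have := hfinj hxy
          rw [Fin.mk.injEq] at this
          have h2 := this
          exact congrArg Sum.inr (Fin.ext (by omega))
    · intro i
      by_cases hi : (i : ℕ) < m
      · simp only [ha', hb', hi, dif_pos]
        refine ⟨((hends ⟨i, hi⟩).1).2, ?_, (hends ⟨i, hi⟩).2.2⟩
        exact hclique hz (Finset.mem_of_mem_erase (hbA ⟨i, hi⟩))
          (Ne.symm ((hends ⟨i, hi⟩).2.1).2)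
      · simp only [ha', hb', hi, dif_neg, not_false_iff]
        have hne : f ⟨2 * ((i : ℕ) - m), by have := hidx i hi; omega⟩ ≠
            f ⟨2 * ((i : ℕ) - m) + 1, hidx i hi⟩ := by
          intro h
          have := congrArg Fin.val (hfinj h)
          simp at this
        refine ⟨?_, ?_, ?_⟩
        · exact hclique hz (Finset.mem_of_mem_erase (hfA _))
            (Ne.symm (Finset.ne_of_mem_erase (hfA _)))
        · exact hclique hz (Finset.mem_of_mem_erase (hfA _))
            (Ne.symm (Finset.ne_of_mem_erase (hfA _)))
        · exact hclique (Finset.mem_of_mem_erase (hfA _))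
            (Finset.mem_of_mem_erase (hfA _)) hne
  refine hfan.mono ?_
  rw [Int.toNat_le]
  rw [Int.ceil_le]
  have hkm : k ≤ 2 * m := by
    have h1 : (k : ℚ) ≤ 2 * m := by linarith
    exact_mod_cast h1
  have h2t : k ≤ m + 2 * t + 2 := by omega
  have c1 : (k : ℚ) ≤ 2 * m := by exact_mod_cast hkm
  have c2 : (k : ℚ) ≤ m + 2 * t + 2 := by exact_mod_cast h2t
  push_cast
  linarith
end

section
/- Let k ≥ 2 and let H be a graph on 2k vertices whose vertex set is the disjoint union of a clique A of size k and an independent set B of size k. Suppose U ⊆ B is a nonempty set with |U| > k/2 such that the set A ∖ N(U) of vertices of A with no neighbour in U also satisfies |A ∖ N(U)| > k/2. Then for any u ∈ U, the complement of H contains a copy of the fan F_{⌈3k/4 − 3/2⌉} with centre u. -/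
/-- Let `H` be a graph on `2k` vertices (`k ≥ 2`) whose vertex set is the disjoint
union of a clique `A` of size `k` and an independent set `B` of size `k`. If
`U ⊆ B` is nonempty with `|U| > k/2`, and the set `A \ N(U)` of vertices of `A`
with no neighbour in `U` also has more than `k/2` elements, then for every `u ∈ U`
the complement of `H` contains the fan `F_{⌈3k/4 - 3/2⌉}` centred at `u`. -/
theorem compl_fan_centred_of_deficient_set (k : ℕ) (hk : 2 ≤ k)
    (V : Type*) [Fintype V] [DecidableEq V]
    (H : SimpleGraph V) [DecidableRel H.Adj]
    (A B : Finset V)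
    (hunion : A ∪ B = Finset.univ) (hdisj : Disjoint A B)
    (hA : A.card = k) (hB : B.card = k)
    (hclique : H.IsClique ↑A) (hindep : Hᶜ.IsClique ↑B)
    (U : Finset V) (hUB : U ⊆ B) (hne : U.Nonempty)
    (hUcard : (k : ℚ) / 2 < (U.card : ℚ))
    (hAN : (k : ℚ) / 2 < ((A.filter fun x => ∀ u ∈ U, ¬ H.Adj x u).card : ℚ)) :
    ∀ u ∈ U, Hᶜ.HasFanOn (⌈3 * (k : ℚ) / 4 - 3 / 2⌉.toNat) u := by
  intro u hu
  have huB : u ∈ B := hUB hu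
  set A' := A.filter (fun x => ∀ u ∈ U, ¬ H.Adj x u) with hA'def
  set c : ℤ := ⌈3 * (k : ℚ) / 4 - 3 / 2⌉ with hcdef
  set n : ℕ := c.toNat with hndef
  have hc4 : 4 * c ≤ 3 * (k : ℤ) - 3 := by
    have h1 : (c : ℚ) < 3 * (k : ℚ) / 4 - 3 / 2 + 1 := by
      rw [hcdef]; exact Int.ceil_lt_add_one _
    have h2 : ((4 * c : ℤ) : ℚ) < ((3 * (k : ℕ) - 2 : ℤ) : ℚ) := by push_cast; linarith
    have h3 : (4 * c : ℤ) < 3 * (k : ℕ) - 2 := by exact_mod_cast h2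
    omega
  have hn4 : 4 * n ≤ 3 * k - 3 := by omega
  have ha' : k < 2 * A'.card := by
    have : (k : ℚ) < 2 * (A'.card : ℚ) := by linarith
    exact_mod_cast this
  have hm : k < 2 * U.card := by
    have : (k : ℚ) < 2 * (U.card : ℚ) := by linarith
    exact_mod_cast this
  set p : ℕ := min (min A'.card (U.card - 1)) n with hpdef
  set q : ℕ := n - p with hqdef
  have hpn : p ≤ n := by omega
  have hkey : 2 * n ≤ k - 1 + p := by omega
  obtain ⟨P, hPsub, hPcard⟩ := Finset.exists_subset_card_eq (show p ≤ A'.card by omega)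
  obtain ⟨Q, hQsub, hQcard⟩ := Finset.exists_subset_card_eq
    (show p ≤ (U.erase u).card by rw [Finset.card_erase_of_mem hu]; omega)
  have hQBe : Q ⊆ B.erase u := hQsub.trans (Finset.erase_subset_erase u hUB)
  obtain ⟨R, hRsub, hRcard⟩ := Finset.exists_subset_card_eq
    (show 2 * q ≤ ((B.erase u) \ Q).card by
      rw [Finset.card_sdiff_of_subset hQBe, Finset.card_erase_of_mem huB, hQcard, hB]; omega)
  -- membership facts
  have hPA : ∀ x ∈ P, x ∈ A := fun x hx => (Finset.mem_filter.mp (hPsub hx)).1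
  have hPU : ∀ x ∈ P, ∀ y ∈ U, ¬ H.Adj x y := fun x hx => (Finset.mem_filter.mp (hPsub hx)).2
  have hQB : ∀ x ∈ Q, x ∈ B := fun x hx => (Finset.mem_erase.mp (hQBe hx)).2
  have hQne : ∀ x ∈ Q, x ≠ u := fun x hx => (Finset.mem_erase.mp (hQBe hx)).1
  have hQU : ∀ x ∈ Q, x ∈ U := fun x hx => Finset.mem_of_mem_erase (hQsub hx)
  have hRB : ∀ x ∈ R, x ∈ B := fun x hx =>
    (Finset.mem_erase.mp (Finset.mem_sdiff.mp (hRsub hx)).1).2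
  have hRne : ∀ x ∈ R, x ≠ u := fun x hx =>
    (Finset.mem_erase.mp (Finset.mem_sdiff.mp (hRsub hx)).1).1
  have hRQ : ∀ x ∈ R, x ∉ Q := fun x hx => (Finset.mem_sdiff.mp (hRsub hx)).2
  have hAB : ∀ x ∈ A, ∀ y ∈ B, x ≠ y := by
    intro x hx y hy hxy
    exact Finset.disjoint_left.mp hdisj hx (hxy ▸ hy)
  -- the injections
  let gE : {x // x ∈ P} ≃ Fin p := Fintype.equivFinOfCardEq (by rw [Fintype.card_coe]; exact hPcard)
  let fE : {x // x ∈ Q} ≃ Fin p := Fintype.equivFinOfCardEq (by rw [Fintype.card_coe]; exact hQcard)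
  let rE : {x // x ∈ R} ≃ Fin (2 * q) :=
    Fintype.equivFinOfCardEq (by rw [Fintype.card_coe]; exact hRcard)
  let g : Fin p → V := fun i => (gE.symm i : V)
  let f : Fin p → V := fun i => (fE.symm i : V)
  let r : Fin (2 * q) → V := fun i => (rE.symm i : V)
  have hg_mem : ∀ i, g i ∈ P := fun i => (gE.symm i).2
  have hf_mem : ∀ i, f i ∈ Q := fun i => (fE.symm i).2
  have hr_mem : ∀ i, r i ∈ R := fun i => (rE.symm i).2
  have hg_inj : Function.Injective g := fun i j h =>
    gE.symm.injective (Subtype.coe_injective h)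
  have hf_inj : Function.Injective f := fun i j h =>
    fE.symm.injective (Subtype.coe_injective h)
  have hr_inj : Function.Injective r := fun i j h =>
    rE.symm.injective (Subtype.coe_injective h)
  set a : Fin n → V := fun i =>
    if h : (i : ℕ) < p then g ⟨i, h⟩
    else r ⟨2 * ((i : ℕ) - p), by have := i.isLt; omega⟩ with hadef
  set b : Fin n → V := fun i =>
    if h : (i : ℕ) < p then f ⟨i, h⟩
    else r ⟨2 * ((i : ℕ) - p) + 1, by have := i.isLt; omega⟩ with hbdef
  have ha1 : ∀ (i : Fin n) (h : (i : ℕ) < p), a i = g ⟨i, h⟩ := fun i h => dif_pos h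
  have hb1 : ∀ (i : Fin n) (h : (i : ℕ) < p), b i = f ⟨i, h⟩ := fun i h => dif_pos h
  have ha2 : ∀ (i : Fin n) (h : ¬ (i : ℕ) < p),
      a i = r ⟨2 * ((i : ℕ) - p), by have := i.isLt; omega⟩ := fun i h => dif_neg h
  have hb2 : ∀ (i : Fin n) (h : ¬ (i : ℕ) < p),
      b i = r ⟨2 * ((i : ℕ) - p) + 1, by have := i.isLt; omega⟩ := fun i h => dif_neg h
  refine ⟨a, b, ?_, ?_⟩
  · -- injectivity
    intro x y hxy
    rcases x with i | i <;> rcases y with j | j <;>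
      simp only [Sum.elim_inl, Sum.elim_inr] at hxy
    · -- a i = a j
      by_cases hi : (i : ℕ) < p <;> by_cases hj : (j : ℕ) < p
      · rw [ha1 i hi, ha1 j hj] at hxy
        have := congrArg Fin.val (hg_inj hxy)
        exact congrArg Sum.inl (Fin.ext this)
      · rw [ha1 i hi, ha2 j hj] at hxy
        exact absurd (hxy ▸ hRB _ (hr_mem _)) fun hB' =>
          hAB _ (hPA _ (hg_mem _)) _ hB' rfl
      · rw [ha2 i hi, ha1 j hj] at hxy
        exact absurd (hxy ▸ hPA _ (hg_mem _)) fun hA' =>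
          hAB _ hA' _ (hRB _ (hr_mem _)) rfl
      · rw [ha2 i hi, ha2 j hj] at hxy
        have := congrArg Fin.val (hr_inj hxy)
        simp only at this
        have hi' : p ≤ (i : ℕ) := Nat.le_of_not_lt hi
        have hj' : p ≤ (j : ℕ) := Nat.le_of_not_lt hj
        exact congrArg Sum.inl (Fin.ext (by omega))
    · -- a i = b j : impossible
      exfalso
      by_cases hi : (i : ℕ) < p <;> by_cases hj : (j : ℕ) < p
      · rw [ha1 i hi, hb1 j hj] at hxy
        exact hAB _ (hPA _ (hg_mem _)) _ (hQB _ (hf_mem _)) hxy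
      · rw [ha1 i hi, hb2 j hj] at hxy
        exact hAB _ (hPA _ (hg_mem _)) _ (hRB _ (hr_mem _)) hxy
      · rw [ha2 i hi, hb1 j hj] at hxy
        exact hRQ _ (hr_mem _) (hxy ▸ hf_mem _)
      · rw [ha2 i hi, hb2 j hj] at hxy
        have := congrArg Fin.val (hr_inj hxy)
        simp only at this
        omega
    · -- b i = a j : impossible
      exfalso
      by_cases hi : (i : ℕ) < p <;> by_cases hj : (j : ℕ) < p
      · rw [hb1 i hi, ha1 j hj] at hxy
        exact hAB _ (hPA _ (hg_mem _)) _ (hQB _ (hf_mem _)) hxy.symm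
      · rw [hb1 i hi, ha2 j hj] at hxy
        exact hRQ _ (hr_mem _) (hxy ▸ hf_mem _)
      · rw [hb2 i hi, ha1 j hj] at hxy
        exact hAB _ (hPA _ (hg_mem _)) _ (hRB _ (hr_mem _)) hxy.symm
      · rw [hb2 i hi, ha2 j hj] at hxy
        have := congrArg Fin.val (hr_inj hxy)
        simp only at this
        omega
    · -- b i = b j
      by_cases hi : (i : ℕ) < p <;> by_cases hj : (j : ℕ) < p
      · rw [hb1 i hi, hb1 j hj] at hxy
        have := congrArg Fin.val (hf_inj hxy)
        exact congrArg Sum.inr (Fin.ext this)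
      · rw [hb1 i hi, hb2 j hj] at hxy
        exact absurd (hxy ▸ hRQ _ (hr_mem _)) fun h => h (hf_mem _)
      · rw [hb2 i hi, hb1 j hj] at hxy
        exact absurd (hxy ▸ hf_mem _) (hRQ _ (hr_mem _))
      · rw [hb2 i hi, hb2 j hj] at hxy
        have := congrArg Fin.val (hr_inj hxy)
        simp only at this
        have hi' : p ≤ (i : ℕ) := Nat.le_of_not_lt hi
        have hj' : p ≤ (j : ℕ) := Nat.le_of_not_lt hj
        exact congrArg Sum.inr (Fin.ext (by omega))
  · -- adjacencies
    have adjBB : ∀ x ∈ B, ∀ y ∈ B, x ≠ y → Hᶜ.Adj x y := fun x hx y hy hne' =>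
      hindep (Finset.mem_coe.mpr hx) (Finset.mem_coe.mpr hy) hne'
    have adjPU : ∀ x ∈ P, ∀ y ∈ U, Hᶜ.Adj x y := by
      intro x hx y hy
      rw [SimpleGraph.compl_adj]
      exact ⟨hAB _ (hPA _ hx) _ (hUB hy), hPU _ hx _ hy⟩
    intro i
    by_cases hi : (i : ℕ) < p
    · rw [ha1 i hi, hb1 i hi]
      refine ⟨(adjPU _ (hg_mem _) _ hu).symm, ?_, ?_⟩
      · exact adjBB u huB _ (hQB _ (hf_mem _)) (Ne.symm (hQne _ (hf_mem _)))
      · exact adjPU _ (hg_mem _) _ (hQU _ (hf_mem _))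
    · rw [ha2 i hi, hb2 i hi]
      refine ⟨?_, ?_, ?_⟩
      · exact adjBB u huB _ (hRB _ (hr_mem _)) (Ne.symm (hRne _ (hr_mem _)))
      · exact adjBB u huB _ (hRB _ (hr_mem _)) (Ne.symm (hRne _ (hr_mem _)))
      · refine adjBB _ (hRB _ (hr_mem _)) _ (hRB _ (hr_mem _)) fun h => ?_
        have := congrArg Fin.val (hr_inj h)
        simp only at this
        omega
end
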